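/- arXiv:2302.04765 — 4 statements merged into one kernel-verified Lean document; each statement's English description precedes it below -/
import Mathlib

section
/- Let 0 < a₁ < 1 and a₂ > 0 with a₁a₂ < 1, and let d₁ > 0. Then a₁·√(a₂ + d₁) < (1 + √(1 − a₁a₂))·(1 + √(1 − a₁)) if and only if d₁ < d₁ʰ, where d₁ʰ := ((1 + √(1 − a₁a₂))/(1 − √(1 − a₁)))² − a₂. -/
theorem stmt_8 (a₁ a₂ d₁ : ℝ) (ha₁ : 0 < a₁) (ha₁' : a₁ < 1)
    (ha₂ : 0 < a₂) (h : a₁ * a₂ < 1) (hd₁ : 0 < d₁) :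
    a₁ * Real.sqrt (a₂ + d₁)
        < (1 + Real.sqrt (1 - a₁ * a₂)) * (1 + Real.sqrt (1 - a₁)) ↔
      d₁ < ((1 + Real.sqrt (1 - a₁ * a₂)) / (1 - Real.sqrt (1 - a₁))) ^ 2 - a₂ := by
  set s := Real.sqrt (1 - a₁) with hs
  set t := Real.sqrt (1 - a₁ * a₂) with ht
  have hs0 : 0 ≤ s := Real.sqrt_nonneg _
  have ht0 : 0 ≤ t := Real.sqrt_nonneg _
  have hs2 : s ^ 2 = 1 - a₁ := Real.sq_sqrt (by linarith)
  have hs1 : s < 1 := by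
    nlinarith [hs2]
  have hfac : a₁ = (1 - s) * (1 + s) := by nlinarith [hs2]
  have hB : 0 < (1 + t) / (1 - s) := div_pos (by linarith) (by linarith)
  have h1s : (1 + s) ≠ 0 := by positivity
  have key : (1 + t) * (1 + s) / a₁ = (1 + t) / (1 - s) := by
    rw [hfac, mul_div_mul_right _ _ h1s]
  constructor
  · intro hlt
    have h1 : Real.sqrt (a₂ + d₁) < (1 + t) * (1 + s) / a₁ :=
      (lt_div_iff₀' ha₁).2 hlt
    rw [key] at h1
    have := (Real.sqrt_lt' hB).1 h1
    linarith
  · intro hlt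
    have h1 : a₂ + d₁ < ((1 + t) / (1 - s)) ^ 2 := by linarith
    have h2 : Real.sqrt (a₂ + d₁) < (1 + t) / (1 - s) := (Real.sqrt_lt' hB).2 h1
    rw [← key] at h2
    calc a₁ * Real.sqrt (a₂ + d₁) < a₁ * ((1 + t) * (1 + s) / a₁) := by
          exact (mul_lt_mul_iff_right₀ ha₁).2 h2
      _ = (1 + t) * (1 + s) := by field_simp
end

section
/- Let 0 < a₁ < 1 and a₂ > 0 with a₁a₂ ≥ 1, and let d₁ > 0 with a₂ + d₁ > 1. Then d₂ᶜ ≤ a₂ + d₁ − 1, where d₂ᶜ := 4·(1 − √(1 − a₁) + (1/(1 − √(1 − a₁)))·(a₁a₂/(a₂ + d₁)))⁻² − 1. -/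
/-! Write `x = 1 - √(1 - a₁)` and `c = a₁ a₂ / (a₂ + d₁)`. By AM-GM,
`(x + c / x)² ≥ 4c ≥ 4 / (a₂ + d₁)` because `a₁ a₂ ≥ 1`, which rearranges to the claim. -/

section

variable {K : Type*} [Field K] [LinearOrder K] [IsStrictOrderedRing K]

lemma four_mul_le_sq_add_one_div_mul {x : K} (hx : x ≠ 0) (c : K) :
    4 * c ≤ (x + 1 / x * c) ^ 2 :=
  calc 4 * c = 4 * x * (1 / x * c) := by field_simp
    _ ≤ (x + 1 / x * c) ^ 2 := four_mul_le_sq_add _ _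

lemma four_mul_inv_sq_le_of_four_le_mul_sq {S E : K} (h : 4 ≤ S * E ^ 2) :
    4 * E⁻¹ ^ 2 ≤ S := by
  have hE : 0 < E ^ 2 := by
    refine lt_of_le_of_ne (sq_nonneg E) fun hE => ?_
    rw [← hE, mul_zero] at h
    norm_num at h
  rw [inv_pow, ← div_eq_mul_inv, div_le_iff₀ hE]
  linarith

end

theorem stmt_13_general (a₁ a₂ d₁ : ℝ) (ha₁ : 0 < a₁)
    (h : 1 ≤ a₁ * a₂) (h' : 1 < a₂ + d₁) :
    4 * (1 - Real.sqrt (1 - a₁)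
          + (1 / (1 - Real.sqrt (1 - a₁))) * (a₁ * a₂ / (a₂ + d₁)))⁻¹ ^ 2 - 1
      ≤ a₂ + d₁ - 1 := by
  have hx : 1 - Real.sqrt (1 - a₁) ≠ 0 := fun hx =>
    ha₁.ne' (by linarith [Real.sqrt_eq_one.mp (sub_eq_zero.mp hx).symm])
  have hS : 0 < a₂ + d₁ := by linarith
  suffices 4 ≤ (a₂ + d₁) * (1 - Real.sqrt (1 - a₁)
      + (1 / (1 - Real.sqrt (1 - a₁))) * (a₁ * a₂ / (a₂ + d₁))) ^ 2 by
    linarith [four_mul_inv_sq_le_of_four_le_mul_sq this]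
  calc (4 : ℝ) = (a₂ + d₁) * (4 * (1 / (a₂ + d₁))) := by field_simp
    _ ≤ (a₂ + d₁) * (4 * (a₁ * a₂ / (a₂ + d₁))) := by gcongr
    _ ≤ _ := by gcongr; exact four_mul_le_sq_add_one_div_mul hx _

theorem stmt_13 (a₁ a₂ d₁ : ℝ) (ha₁ : 0 < a₁) (ha₁' : a₁ < 1)
    (ha₂ : 0 < a₂) (h : 1 ≤ a₁ * a₂) (hd₁ : 0 < d₁) (h' : 1 < a₂ + d₁) :
    4 * (1 - Real.sqrt (1 - a₁)
          + (1 / (1 - Real.sqrt (1 - a₁))) * (a₁ * a₂ / (a₂ + d₁)))⁻¹ ^ 2 - 1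
      ≤ a₂ + d₁ - 1 :=
  stmt_13_general a₁ a₂ d₁ ha₁ h h'
end

section
/- Suppose y : [0,∞) → ℝ is differentiable, nonnegative, and satisfies y'(t) ≤ −2A·y(t) + B·σ(t) for all t ≥ 0, where A > 0, B ≥ 0 are constants and σ : [0,∞) → ℝ is continuous, nonnegative, with σ(t) → 0 as t → ∞. Then y(t) → 0 as t → ∞. -/
/-!
Once `B σ t ≤ A b` (which holds for large `t` since `σ → 0`), the inequality becomes
`y' ≤ -2A y + A b`, so `(y t - b/2) e^{2At}` is nonincreasing, i.e.
`y t ≤ b/2 + (y T - b/2) e^{-2A(t-T)}`. Hence `y < b` eventually, for every `b > 0`;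
together with `y ≥ 0` this gives `y → 0`.
-/

open Filter Set Real

theorem antitoneOn_sub_mul_exp_of_deriv_le {y : ℝ → ℝ} {k δ T : ℝ} (hk : 0 < k)
    (hy : Differentiable ℝ y) (h : ∀ t > T, deriv y t ≤ -k * y t + δ) :
    AntitoneOn (fun t => (y t - δ / k) * exp (k * t)) (Ici T) := by
  have hderiv : ∀ t, HasDerivAt (fun t => (y t - δ / k) * exp (k * t))
      (exp (k * t) * (deriv y t + k * y t - δ)) t := by
    intro t
    have hexp : HasDerivAt (fun t => exp (k * t)) (exp (k * t) * k) t := by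
      simpa using ((hasDerivAt_id t).const_mul k).exp
    refine (((hy t).hasDerivAt.sub_const (δ / k)).mul hexp).congr_deriv ?_
    field_simp
    ring
  have hdiff : Differentiable ℝ (fun t => (y t - δ / k) * exp (k * t)) :=
    fun t => (hderiv t).differentiableAt
  refine antitoneOn_of_deriv_nonpos (convex_Ici T) hdiff.continuous.continuousOn
    hdiff.differentiableOn fun t ht => ?_
  rw [interior_Ici] at ht
  rw [(hderiv t).deriv]
  exact mul_nonpos_of_nonneg_of_nonpos (exp_pos _).le (by linarith [h t ht])

theorem le_of_deriv_le_neg_mul_add {y : ℝ → ℝ} {k δ T : ℝ} (hk : 0 < k)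
    (hy : Differentiable ℝ y) (h : ∀ t > T, deriv y t ≤ -k * y t + δ) {t : ℝ} (ht : T ≤ t) :
    y t ≤ δ / k + (y T - δ / k) * exp (-(k * (t - T))) := by
  have hanti : (y t - δ / k) * exp (k * t) ≤ (y T - δ / k) * exp (k * T) :=
    antitoneOn_sub_mul_exp_of_deriv_le hk hy h self_mem_Ici ht ht
  have hsplit : exp (k * T) = exp (-(k * (t - T))) * exp (k * t) := by
    rw [← exp_add]; ring_nf
  rw [hsplit, ← mul_assoc] at hanti
  linarith [le_of_mul_le_mul_right hanti (exp_pos _)]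

theorem eventually_lt_of_deriv_le_neg_mul_add {y : ℝ → ℝ} {k δ c : ℝ} (hk : 0 < k)
    (hy : Differentiable ℝ y) (h : ∀ᶠ t in atTop, deriv y t ≤ -k * y t + δ) (hc : δ / k < c) :
    ∀ᶠ t in atTop, y t < c := by
  obtain ⟨T, hT⟩ := eventually_atTop.mp h
  have hdecay : Tendsto (fun t => δ / k + (y T - δ / k) * exp (-(k * (t - T)))) atTop
      (nhds (δ / k)) := by
    have hlin : Tendsto (fun t => k * (t - T)) atTop atTop :=
      (tendsto_atTop_add_const_right _ (-T) tendsto_id).const_mul_atTop hk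
    simpa using ((tendsto_exp_neg_atTop_nhds_zero.comp hlin).const_mul (y T - δ / k)).const_add
      (δ / k)
  filter_upwards [hdecay.eventually (gt_mem_nhds hc), eventually_ge_atTop T] with t hlt ht
  exact (le_of_deriv_le_neg_mul_add hk hy (fun s hs => hT s hs.le) ht).trans_lt hlt

theorem stmt_17_general (y σ : ℝ → ℝ) (A B : ℝ) (hA : 0 < A)
    (hy : Differentiable ℝ y) (hynn : ∀ t ≥ (0 : ℝ), 0 ≤ y t)
    (hineq : ∀ t ≥ (0 : ℝ), deriv y t ≤ -2 * A * y t + B * σ t)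
    (hσ : Tendsto σ atTop (nhds 0)) :
    Tendsto y atTop (nhds 0) := by
  refine tendsto_order.2 ⟨fun a ha => ?_, fun b hb => ?_⟩
  · filter_upwards [eventually_ge_atTop 0] with t ht
    exact ha.trans_le (hynn t ht)
  · have hBσ : Tendsto (fun t => B * σ t) atTop (nhds 0) := by simpa using hσ.const_mul B
    refine eventually_lt_of_deriv_le_neg_mul_add (k := 2 * A) (δ := A * b) (by positivity) hy ?_
      (by rw [div_lt_iff₀ (by positivity)]; nlinarith)
    filter_upwards [hBσ.eventually (gt_mem_nhds (by positivity : 0 < A * b)),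
      eventually_ge_atTop 0] with t hσt ht
    linarith [hineq t ht]

theorem stmt_17 (y σ : ℝ → ℝ) (A B : ℝ) (hA : 0 < A) (hB : 0 ≤ B)
    (hy : Differentiable ℝ y) (hynn : ∀ t ≥ (0 : ℝ), 0 ≤ y t)
    (hineq : ∀ t ≥ (0 : ℝ), deriv y t ≤ -2 * A * y t + B * σ t)
    (hσcont : Continuous σ) (hσnn : ∀ t ≥ (0 : ℝ), 0 ≤ σ t)
    (hσ : Tendsto σ atTop (nhds 0)) :
    Tendsto y atTop (nhds 0) :=
  stmt_17_general y σ A B hA hy hynn hineq hσ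
end

section
/- Let a₁, a₂, d₁, d₂, r > 0 and set α := (a₂ + a₁β)/2, Φ(β) := −a₁²β² + 2(2(1 + d₂/r) − a₁(a₂ + d₁))β − (a₂ + d₁)², Ψ(β) := −a₁²β² + 2(2 − a₁a₂)β − a₂². If β > 0 satisfies Φ(β) > 0 and Ψ(β) > 0, then 2(β − α²) + ((d₂/r)·β − α·d₁) > Φ(β)/4 > 0. -/
theorem stmt_19 (a₁ a₂ d₁ d₂ r β : ℝ) (ha₁ : 0 < a₁) (ha₂ : 0 < a₂)
    (hd₁ : 0 < d₁) (hd₂ : 0 < d₂) (hr : 0 < r) (hβ : 0 < β)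
    (hΦ : 0 < -a₁ ^ 2 * β ^ 2 + 2 * (2 * (1 + d₂ / r) - a₁ * (a₂ + d₁)) * β
        - (a₂ + d₁) ^ 2)
    (hΨ : 0 < -a₁ ^ 2 * β ^ 2 + 2 * (2 - a₁ * a₂) * β - a₂ ^ 2) :
    2 * (β - ((a₂ + a₁ * β) / 2) ^ 2)
        + ((d₂ / r) * β - ((a₂ + a₁ * β) / 2) * d₁)
      > (-a₁ ^ 2 * β ^ 2 + 2 * (2 * (1 + d₂ / r) - a₁ * (a₂ + d₁)) * β
        - (a₂ + d₁) ^ 2) / 4 ∧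
    (-a₁ ^ 2 * β ^ 2 + 2 * (2 * (1 + d₂ / r) - a₁ * (a₂ + d₁)) * β
        - (a₂ + d₁) ^ 2) / 4 > 0 := by
  constructor
  · nlinarith [sq_nonneg d₁]
  · linarith
end
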